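/- arXiv:2510.02775 — 2 statements merged into one kernel-verified Lean document; each statement's English description precedes it below -/
import Mathlib

section
/- Let $P(z) = c\prod_{j=1}^n (z - z_j)$ be a complex polynomial of degree $n$ with all zeros satisfying $|z_j| \le 1$. Then for every $z$ with $|z| = 1$ and $P(z) \ne 0$, one has $\operatorname{Re}\!\left( z \frac{P'(z)}{P(z)} \right) \ge \frac{n}{2}\left(1 + \frac{1}{n}\cdot\frac{|a_n| - |a_0|}{|a_n| + |a_0|}\right)$, where $a_n$ and $a_0$ are the leading coefficient and constant term of $P$. -/
/-!
Since `w P'(w) / P(w) = ∑ⱼ w / (w - zⱼ)`, it suffices to bound each term: for `|w| = 1` and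
`|ζ| ≤ 1` one has `Re (w / (w - ζ)) ≥ 1 / (1 + |ζ|) = (1 + g |ζ|) / 2` with
`g t = (1 - t) / (1 + t)`. On `[0, 1]` the function `g` satisfies `g (a b) ≤ g a + g b`, so
`∑ⱼ g |zⱼ| ≥ g (∏ⱼ |zⱼ|) = g (|a₀| / |aₙ|)`, which is the claimed bound.
-/

open Polynomial Finset ComplexConjugate

lemma one_sub_mul_div_one_add_mul_le {a b : ℝ} (ha₀ : 0 ≤ a) (ha₁ : a ≤ 1) (hb₀ : 0 ≤ b)
    (hb₁ : b ≤ 1) : (1 - a * b) / (1 + a * b) ≤ (1 - a) / (1 + a) + (1 - b) / (1 + b) := by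
  rw [div_add_div _ _ (by positivity) (by positivity),
    div_le_div_iff₀ (by positivity) (by positivity)]
  nlinarith [mul_nonneg (mul_nonneg (sub_nonneg.2 ha₁) (sub_nonneg.2 hb₁))
    (sub_nonneg.2 (mul_le_one₀ ha₁ hb₀ hb₁))]

lemma one_sub_prod_div_one_add_prod_le_sum {ι : Type*} (s : Finset ι) {t : ι → ℝ}
    (h₀ : ∀ j ∈ s, 0 ≤ t j) (h₁ : ∀ j ∈ s, t j ≤ 1) :
    (1 - ∏ j ∈ s, t j) / (1 + ∏ j ∈ s, t j) ≤ ∑ j ∈ s, (1 - t j) / (1 + t j) := by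
  induction s using Finset.cons_induction with
  | empty => simp
  | cons a s ha ih =>
    simp only [Finset.forall_mem_cons] at h₀ h₁
    rw [prod_cons, sum_cons]
    calc _ ≤ (1 - t a) / (1 + t a) + (1 - ∏ j ∈ s, t j) / (1 + ∏ j ∈ s, t j) :=
          one_sub_mul_div_one_add_mul_le h₀.1 h₁.1 (prod_nonneg h₀.2) (prod_le_one h₀.2 h₁.2)
      _ ≤ _ := by gcongr; exact ih h₀.2 h₁.2

lemma Complex.inv_one_add_norm_le_re_div_sub {w ζ : ℂ} (hw : ‖w‖ = 1) (hζ : ‖ζ‖ ≤ 1)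
    (hne : w ≠ ζ) : 1 / (1 + ‖ζ‖) ≤ (w / (w - ζ)).re := by
  set r := (w * conj ζ).re
  have hr : -‖ζ‖ ≤ r := by
    have := Complex.abs_re_le_norm (w * conj ζ)
    rw [norm_mul, hw, Complex.norm_conj, one_mul] at this
    exact (abs_le.1 this).1
  have hN : Complex.normSq (w - ζ) = 1 + ‖ζ‖ ^ 2 - 2 * r := by
    rw [Complex.normSq_sub, Complex.normSq_eq_norm_sq, Complex.normSq_eq_norm_sq, hw, one_pow]
  have hre : (w / (w - ζ)).re = (1 - r) / Complex.normSq (w - ζ) := by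
    rw [Complex.div_re, ← add_div]
    congr 1
    have hw' := Complex.normSq_eq_norm_sq w
    simp only [Complex.normSq_apply, hw, r, Complex.mul_re, Complex.conj_re, Complex.conj_im,
      Complex.sub_re, Complex.sub_im] at hw' ⊢
    linarith
  have hpos : 0 < Complex.normSq (w - ζ) := Complex.normSq_pos.2 (sub_ne_zero.2 hne)
  -- after clearing denominators the claim is `0 ≤ (1 - |ζ|) (|ζ| + r)`
  rw [hre, div_le_div_iff₀ (by positivity) hpos, hN]
  nlinarith [mul_nonneg (sub_nonneg.2 hζ) (neg_le_iff_add_nonneg.1 hr)]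

lemma eval_derivative_div_eval_C_mul_prod_X_sub_C {K ι : Type*} [Field K] [Fintype ι] (c : K)
    (z : ι → K) {x : K} (hx : (C c * ∏ j, (X - C (z j))).eval x ≠ 0) :
    (derivative (C c * ∏ j, (X - C (z j)))).eval x / (C c * ∏ j, (X - C (z j))).eval x =
      ∑ j, 1 / (x - z j) := by
  have hc : c ≠ 0 := by rintro rfl; simp at hx
  have hroots : (C c * ∏ j, (X - C (z j))).roots = univ.val.map z := by
    rw [roots_C_mul _ hc, Finset.prod_eq_multiset_prod]
    simpa [Multiset.map_map, Function.comp_def] using roots_multiset_prod_X_sub_C (univ.val.map z)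
  have hsplits : (C c * ∏ j, (X - C (z j))).Splits :=
    (Splits.prod fun j _ => Splits.X_sub_C (z j)).C_mul c
  rw [hsplits.eval_derivative_div_eval_of_ne_zero hx, hroots, Multiset.map_map]
  rfl

theorem stmt_3_general (n : ℕ) (hn : 0 < n) (c : ℂ) (z : Fin n → ℂ)
    (hz : ∀ j, ‖z j‖ ≤ 1)
    (P : Polynomial ℂ) (hP : P = Polynomial.C c * ∏ j, (Polynomial.X - Polynomial.C (z j)))
    (w : ℂ) (hw : ‖w‖ = 1) (hPw : P.eval w ≠ 0) :
    (n : ℝ) / 2 * (1 + (1 / n) * ((‖c‖ - ‖P.coeff 0‖) / (‖c‖ + ‖P.coeff 0‖))) ≤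
      (w * P.derivative.eval w / P.eval w).re := by
  subst hP
  obtain ⟨hc, hwz⟩ : c ≠ 0 ∧ ∀ j, w ≠ z j := by
    simpa [eval_prod, prod_ne_zero_iff, sub_ne_zero] using hPw
  have hcoeff : ‖(C c * ∏ j, (X - C (z j))).coeff 0‖ = ‖c‖ * ∏ j, ‖z j‖ := by
    simp [coeff_zero_eq_eval_zero, eval_prod, norm_prod]
  have hc₀ : 0 < ‖c‖ := norm_pos_iff.2 hc
  rw [mul_div_assoc, eval_derivative_div_eval_C_mul_prod_X_sub_C c z hPw, mul_sum, Complex.re_sum,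
    hcoeff, ← mul_one_sub, ← mul_one_add, mul_div_mul_left _ _ hc₀.ne']
  calc (n : ℝ) / 2 * (1 + 1 / n * ((1 - ∏ j, ‖z j‖) / (1 + ∏ j, ‖z j‖)))
      = ∑ _j : Fin n, 1 / 2 + 1 / 2 * ((1 - ∏ j, ‖z j‖) / (1 + ∏ j, ‖z j‖)) := by
        have : (n : ℝ) ≠ 0 := by positivity
        rw [sum_const, card_univ, Fintype.card_fin, nsmul_eq_mul]
        field_simp
    _ ≤ ∑ _j : Fin n, 1 / 2 + 1 / 2 * ∑ j, (1 - ‖z j‖) / (1 + ‖z j‖) := by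
        gcongr
        exact one_sub_prod_div_one_add_prod_le_sum _ (fun j _ => norm_nonneg _) (fun j _ => hz j)
    _ = ∑ j, 1 / (1 + ‖z j‖) := by
        rw [mul_sum, ← sum_add_distrib]
        refine sum_congr rfl fun j _ => ?_
        field_simp
        ring
    _ ≤ ∑ j, (w * (1 / (w - z j))).re := by
        gcongr with j
        rw [mul_one_div]
        exact Complex.inv_one_add_norm_le_re_div_sub hw (hz j) (hwz j)

theorem stmt_3 (n : ℕ) (hn : 0 < n) (c : ℂ) (hc : c ≠ 0) (z : Fin n → ℂ)
    (hz : ∀ j, ‖z j‖ ≤ 1)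
    (P : Polynomial ℂ) (hP : P = Polynomial.C c * ∏ j, (Polynomial.X - Polynomial.C (z j)))
    (w : ℂ) (hw : ‖w‖ = 1) (hPw : P.eval w ≠ 0) :
    (n : ℝ) / 2 * (1 + (1 / n) * ((‖c‖ - ‖P.coeff 0‖) / (‖c‖ + ‖P.coeff 0‖))) ≤
      (w * P.derivative.eval w / P.eval w).re :=
  stmt_3_general n hn c z hz P hP w hw hPw
end

section
/- Let $P(z)$ be a degree-$n$ polynomial with all zeros in $|z| \le 1$. Then $\max_{|z|=1} |P'(z)| \ge \frac{1}{2}\left(n + \frac{|a_n| - |a_0|}{|a_n| + |a_0|}\right) \max_{|z|=1} |P(z)|$, where $a_n$ is the leading coefficient and $a_0$ the constant term of $P$. -/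
/-!
At a point `z` of the unit circle where `P z ≠ 0`, the logarithmic derivative gives
`z P'(z) = P(z) ∑ z / (z - r)`, the sum running over the roots `r` of `P`. For `|r| ≤ 1` each
summand has real part at least `1 / (1 + |r|)`, so `|P'(z)| ≥ |P(z)| ∑ 1 / (1 + |r|)`.
For `t_j ∈ [0, 1]` one has `∑ 1 / (1 + t_j) ≥ (n - 1) / 2 + 1 / (1 + ∏ t_j)`, by induction from
the case of two numbers, and `∏ |r_j| = |a_0| / |a_n|` turns this into the stated constant.
It remains to evaluate at a point where `|P|` attains its maximum on the circle.
-/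

open Polynomial

theorem Multiset.prod_le_one_of_mem_Icc {R : Type*} [CommSemiring R] [PartialOrder R]
    [IsOrderedRing R] {s : Multiset R} (h : ∀ a ∈ s, 0 ≤ a ∧ a ≤ 1) : s.prod ≤ 1 := by
  induction s using Multiset.induction_on with
  | empty => simp
  | cons a s ih =>
    simp only [Multiset.mem_cons, forall_eq_or_imp] at h
    rw [Multiset.prod_cons]
    exact mul_le_one₀ h.1.2 (Multiset.prod_nonneg fun b hb => (h.2 b hb).1) (ih h.2)

section OrderedField

variable {K : Type*} [Field K] [LinearOrder K] [IsStrictOrderedRing K]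

theorem inv_one_add_mul_add_half_le {a b : K} (ha₀ : 0 ≤ a) (ha₁ : a ≤ 1) (hb₀ : 0 ≤ b)
    (hb₁ : b ≤ 1) : (1 + a * b)⁻¹ + 1 / 2 ≤ (1 + a)⁻¹ + (1 + b)⁻¹ := by
  have key : (1 + a)⁻¹ + (1 + b)⁻¹ - ((1 + a * b)⁻¹ + 1 / 2) =
      (1 - a) * (1 - b) * (1 - a * b) / (2 * (1 + a) * (1 + b) * (1 + a * b)) := by
    field_simp
    ring
  rw [← sub_nonneg, key]
  have hab : 0 ≤ 1 - a * b := sub_nonneg.2 (mul_le_one₀ ha₁ hb₀ hb₁)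
  exact div_nonneg (mul_nonneg (mul_nonneg (sub_nonneg.2 ha₁) (sub_nonneg.2 hb₁)) hab)
    (by positivity)

theorem Multiset.card_sub_one_div_two_add_inv_one_add_prod_le_sum {s : Multiset K}
    (h : ∀ t ∈ s, 0 ≤ t ∧ t ≤ 1) :
    ((card s : K) - 1) / 2 + (1 + s.prod)⁻¹ ≤ (s.map fun t => (1 + t)⁻¹).sum := by
  induction s using Multiset.induction_on with
  | empty => norm_num
  | cons a s ih =>
    simp only [Multiset.mem_cons, forall_eq_or_imp] at h
    have hstep := inv_one_add_mul_add_half_le h.1.1 h.1.2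
      (Multiset.prod_nonneg fun b hb => (h.2 b hb).1) (Multiset.prod_le_one_of_mem_Icc h.2)
    rw [Multiset.card_cons, Multiset.prod_cons, Multiset.map_cons, Multiset.sum_cons]
    push_cast
    linarith [ih h.2]

end OrderedField

theorem Complex.inv_one_add_norm_le_re_inv_one_sub {w : ℂ} (hw : ‖w‖ ≤ 1) (hw₁ : w ≠ 1) :
    (1 + ‖w‖)⁻¹ ≤ (1 - w)⁻¹.re := by
  have hnorm : ‖w‖ ^ 2 = w.re ^ 2 + w.im ^ 2 := by rw [Complex.sq_norm, normSq_apply]; ring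
  have hsq : normSq (1 - w) = 1 - 2 * w.re + ‖w‖ ^ 2 := by
    rw [normSq_apply, hnorm, sub_re, sub_im, one_re, one_im]
    ring
  have hpos : 0 < normSq (1 - w) := normSq_pos.2 (sub_ne_zero.2 hw₁.symm)
  have hre : -‖w‖ ≤ w.re := neg_le_of_abs_le (abs_re_le_norm w)
  rw [inv_re, sub_re, one_re, inv_eq_one_div, div_le_div_iff₀ (by positivity) hpos, hsq]
  -- `(1 - Re w) (1 + |w|) - |1 - w|² = (|w| + Re w) (1 - |w|)`
  nlinarith [mul_nonneg (neg_le_iff_add_nonneg.1 hre) (sub_nonneg.2 hw)]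

theorem Complex.inv_one_add_norm_le_re_div_sub_s16 {z r : ℂ} (hz : ‖z‖ = 1) (hr : ‖r‖ ≤ 1)
    (hzr : z ≠ r) : (1 + ‖r‖)⁻¹ ≤ (z / (z - r)).re := by
  have hz₀ : z ≠ 0 := by rintro rfl; simp at hz
  have hdiv : z / (z - r) = (1 - r / z)⁻¹ := by field_simp
  have hnorm : ‖r / z‖ = ‖r‖ := by rw [norm_div, hz, div_one]
  rw [hdiv, ← hnorm]
  refine inv_one_add_norm_le_re_inv_one_sub (hnorm ▸ hr) ?_
  rw [ne_eq, div_eq_one_iff_eq hz₀]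
  exact hzr.symm

theorem Polynomial.Splits.norm_coeff_zero {K : Type*} [NormedField K] {P : K[X]}
    (hP : P.Splits) : ‖P.coeff 0‖ = ‖P.leadingCoeff‖ * (P.roots.map norm).prod := by
  rw [coeff_zero_eq_eval_zero, hP.eval_eq_prod_roots, norm_mul]
  congr 1
  rw [← normHom_apply, map_multiset_prod, Multiset.map_map]
  simp

theorem Polynomial.mul_norm_eval_le_norm_eval_derivative {P : ℂ[X]}
    (hzeros : ∀ r, P.IsRoot r → ‖r‖ ≤ 1) {z : ℂ} (hz : ‖z‖ = 1) :
    (((P.natDegree : ℝ) - 1) / 2 + (1 + (P.roots.map norm).prod)⁻¹) * ‖P.eval z‖ ≤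
      ‖P.derivative.eval z‖ := by
  rcases eq_or_ne (P.eval z) 0 with hPz | hPz
  · simp [hPz]
  have hroots : ∀ r ∈ P.roots, ‖r‖ ≤ 1 := fun r hr => hzeros r (isRoot_of_mem_roots hr)
  set S := (P.roots.map fun r => 1 / (z - r)).sum
  have hderiv : ‖P.derivative.eval z‖ = ‖P.eval z‖ * ‖z * S‖ := by
    rw [(IsAlgClosed.splits P).eval_derivative_eq_eval_mul_sum hPz, norm_mul, norm_mul z, hz,
      one_mul]
  have hre : ((P.natDegree : ℝ) - 1) / 2 + (1 + (P.roots.map norm).prod)⁻¹ ≤ (z * S).re :=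
    calc _ ≤ ((P.roots.map norm).map fun t => (1 + t)⁻¹).sum := by
          simpa [IsAlgClosed.card_roots_eq_natDegree] using
            Multiset.card_sub_one_div_two_add_inv_one_add_prod_le_sum (s := P.roots.map norm)
              fun t ht => by
                obtain ⟨r, hr, rfl⟩ := Multiset.mem_map.1 ht
                exact ⟨norm_nonneg r, hroots r hr⟩
      _ = (P.roots.map fun r => (1 + ‖r‖)⁻¹).sum := by rw [Multiset.map_map]; rfl
      _ ≤ (P.roots.map fun r => (z / (z - r)).re).sum :=
          Multiset.sum_map_le_sum_map _ _ fun r hr =>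
            Complex.inv_one_add_norm_le_re_div_sub_s16 hz (hroots r hr)
              fun h => hPz (h ▸ isRoot_of_mem_roots hr)
      _ = (z * S).re := by
          rw [← Multiset.sum_map_mul_left, ← Complex.coe_reAddGroupHom, map_multiset_sum,
            Multiset.map_map]
          simp only [Function.comp_def, Complex.coe_reAddGroupHom, mul_one_div]
  rw [hderiv, mul_comm]
  exact mul_le_mul_of_nonneg_left (hre.trans (Complex.re_le_norm _)) (norm_nonneg _)

theorem mul_iSup_le_iSup_of_forall_mul_le {X : Type*} [TopologicalSpace X] [CompactSpace X]
    [Nonempty X] {f g : X → ℝ} (hf : Continuous f) (hg : Continuous g) {c : ℝ}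
    (h : ∀ x, c * f x ≤ g x) : c * ⨆ x, f x ≤ ⨆ x, g x := by
  obtain ⟨x₀, hx₀⟩ := hf.exists_forall_ge (by simp [Filter.cocompact_eq_bot])
  rw [ciSup_eq_of_forall_le_of_forall_lt_exists_gt hx₀ fun _ hw => ⟨x₀, hw⟩]
  exact (h x₀).trans (le_ciSup (isCompact_range hg).bddAbove x₀)

theorem stmt_16_general (P : Polynomial ℂ) (n : ℕ) (hdeg : P.natDegree = n)
    (hzeros : ∀ z : ℂ, P.IsRoot z → ‖z‖ ≤ 1) :
    1 / 2 * ((n : ℝ) + (‖P.leadingCoeff‖ - ‖P.coeff 0‖) / (‖P.leadingCoeff‖ + ‖P.coeff 0‖)) *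
        (⨆ w : Metric.sphere (0 : ℂ) 1, ‖P.eval (w : ℂ)‖) ≤
      ⨆ w : Metric.sphere (0 : ℂ) 1, ‖P.derivative.eval (w : ℂ)‖ := by
  rcases eq_or_ne P 0 with rfl | hP
  · simp
  have hconst : 1 / 2 * ((n : ℝ) + (‖P.leadingCoeff‖ - ‖P.coeff 0‖) /
      (‖P.leadingCoeff‖ + ‖P.coeff 0‖)) =
      ((P.natDegree : ℝ) - 1) / 2 + (1 + (P.roots.map norm).prod)⁻¹ := by
    have hlc : ‖P.leadingCoeff‖ ≠ 0 := by simpa using hP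
    have hprod : 0 ≤ (P.roots.map norm).prod := Multiset.prod_map_nonneg fun r _ => norm_nonneg r
    rw [(IsAlgClosed.splits P).norm_coeff_zero, hdeg]
    field_simp
    ring
  have : Nonempty (Metric.sphere (0 : ℂ) 1) := ⟨⟨1, by simp⟩⟩
  rw [hconst]
  exact mul_iSup_le_iSup_of_forall_mul_le (by fun_prop) (by fun_prop)
    fun w => P.mul_norm_eval_le_norm_eval_derivative hzeros (mem_sphere_zero_iff_norm.1 w.2)

theorem stmt_16 (P : Polynomial ℂ) (n : ℕ) (hn : 0 < n) (hdeg : P.natDegree = n)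
    (hzeros : ∀ z : ℂ, P.IsRoot z → ‖z‖ ≤ 1) :
    1 / 2 * ((n : ℝ) + (‖P.leadingCoeff‖ - ‖P.coeff 0‖) / (‖P.leadingCoeff‖ + ‖P.coeff 0‖)) *
        (⨆ w : Metric.sphere (0 : ℂ) 1, ‖P.eval (w : ℂ)‖) ≤
      ⨆ w : Metric.sphere (0 : ℂ) 1, ‖P.derivative.eval (w : ℂ)‖ :=
  stmt_16_general P n hdeg hzeros
end
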